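/- Let G be a finite abelian group of order v. Suppose {D_0,D_1,D_2,D_3} is a difference family of type H in G satisfying (d3), and {S_0,S_1,S_2,S_3} is a difference family of type H_4* in G satisfying (c1). Define, in G × ℤ/2ℤ: B_0 = D_0×{0} ∪ (G∖D_2)×{1}, B_1 = D_1×{0} ∪ (G∖D_3)×{1}, B_2 = S_0×{0} ∪ S_2×{1}, B_3 = S_1×{0} ∪ S_3×{1}. Then {B_0,B_1,B_2,B_3} is a difference family of type H_4* in G × ℤ/2ℤ. -/

import Mathlib

open Finset

noncomputable section

variable {G : Type*}

/-- The element of the group ring `ℤ[G]` associated to a finite subset `D ⊆ G`. -/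
def grp [AddCommGroup G] [DecidableEq G] (D : Finset G) : AddMonoidAlgebra ℤ G :=
  ∑ x ∈ D, AddMonoidAlgebra.single x 1

/-- `D^{(-1)} = {-x : x ∈ D}`. -/
def negSet [AddCommGroup G] [DecidableEq G] (D : Finset G) : Finset G :=
  D.image (fun x => -x)

/-- A subset is symmetric if `D = -D`. -/
def IsSymmetric [AddCommGroup G] [DecidableEq G] (D : Finset G) : Prop :=
  negSet D = D

/-- `G* = G \ {0}` as a finset. -/
def Gstar (G : Type*) [AddCommGroup G] [Fintype G] [DecidableEq G] : Finset G :=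
  Finset.univ \ {0}

/-- A difference family of type `H`: four blocks with `λ = Σ|D_i| - |G|`. -/
def IsTypeH [AddCommGroup G] [Fintype G] [DecidableEq G] (D : Fin 4 → Finset G) : Prop :=
  ∑ i, grp (D i) * grp (negSet (D i)) =
    ((∑ i, ((D i).card : ℤ)) - (Fintype.card G : ℤ)) • grp (Finset.univ : Finset G)
      + (Fintype.card G : ℤ) • AddMonoidAlgebra.single (0 : G) (1 : ℤ)

/-- A difference family of type `H_4^*`: four blocks with `λ = Σ|B_i| - (|G|+1)`. -/
def IsTypeH4star [AddCommGroup G] [Fintype G] [DecidableEq G] (B : Fin 4 → Finset G) : Prop :=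
  ∑ i, grp (B i) * grp (negSet (B i)) =
    ((∑ i, ((B i).card : ℤ)) - ((Fintype.card G : ℤ) + 1)) • grp (Finset.univ : Finset G)
      + ((Fintype.card G : ℤ) + 1) • AddMonoidAlgebra.single (0 : G) (1 : ℤ)

/-- A difference family of type `H_2^*`: two blocks with `λ = Σ|S_i| - (|G|+1)/2`. -/
def IsTypeH2star [AddCommGroup G] [Fintype G] [DecidableEq G] (S : Fin 2 → Finset G) : Prop :=
  ∑ i, grp (S i) * grp (negSet (S i)) =
    ((∑ i, ((S i).card : ℤ)) - ((Fintype.card G : ℤ) + 1) / 2) • grp (Finset.univ : Finset G)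
      + (((Fintype.card G : ℤ) + 1) / 2) • AddMonoidAlgebra.single (0 : G) (1 : ℤ)

/-- Condition (d3). -/
def CondD3 [AddCommGroup G] [Fintype G] [DecidableEq G] (D : Fin 4 → Finset G) : Prop :=
  grp (D 0) * grp (negSet (D 2)) + grp (D 2) * grp (negSet (D 0))
    + grp (D 1) * grp (negSet (D 3)) + grp (D 3) * grp (negSet (D 1)) =
    ((∑ i, ((D i).card : ℤ)) - (Fintype.card G : ℤ) + 1) • grp (Finset.univ : Finset G)

/-- Condition (c1). -/
def CondC1 [AddCommGroup G] [Fintype G] [DecidableEq G] (S : Fin 4 → Finset G) : Prop :=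
  grp (S 0) * grp (negSet (S 2)) + grp (S 2) * grp (negSet (S 0))
    + grp (S 1) * grp (negSet (S 3)) + grp (S 3) * grp (negSet (S 1)) =
    ((∑ i, ((S i).card : ℤ)) - (Fintype.card G : ℤ)) • grp (Finset.univ : Finset G)

/-- Condition (d2). -/
def CondD2 [AddCommGroup G] [Fintype G] [DecidableEq G] (D : Fin 4 → Finset G) : Prop :=
  ∃ E₀ E₁ : Finset G, E₀ ⊆ Gstar G ∧ E₁ ⊆ Gstar G ∧
    grp (D 0) + grp (D 1) - grp (D 2) - grp (D 3) = grp E₀ - grp (Gstar G \ E₀) ∧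
    grp (D 0) + grp (D 3) - grp (D 1) - grp (D 2) = grp E₁ - grp (Gstar G \ E₁) ∧
    IsTypeH4star ![E₀, E₁, Gstar G \ E₀, Gstar G \ E₁]

/-- A building family: eight symmetric, pairwise disjoint subsets partitioning `G*`,
satisfying (a3) and (a4). -/
def IsBuildingFamily [AddCommGroup G] [Fintype G] [DecidableEq G] (A : Fin 8 → Finset G) : Prop :=
  (∀ i, IsSymmetric (A i)) ∧
  (∀ i j, i ≠ j → Disjoint (A i) (A j)) ∧
  (Finset.univ.biUnion A = Gstar G) ∧
  IsTypeH4star ![A 0 ∪ A 1 ∪ A 6 ∪ A 7, A 2 ∪ A 3 ∪ A 4 ∪ A 5,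
    A 0 ∪ A 3 ∪ A 5 ∪ A 6, A 1 ∪ A 2 ∪ A 4 ∪ A 7] ∧
  (∑ i, grp (A i) * grp (A i)) - (∑ i, grp (A i) * grp (A (i + 4))) =
    ((Fintype.card G : ℤ) - 1) • AddMonoidAlgebra.single (0 : G) (1 : ℤ)
      + ((grp (A 0) + grp (A 1) + grp (A 2) + grp (A 3))
        - (grp (A 4) + grp (A 5) + grp (A 6) + grp (A 7)))

end

/-!
Write `ℤ[G × ℤ/2] = ℤ[G][u]` with `u = (0, 1)`, so `u² = 1` and `u = u⁻¹`. A block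
`A × {0} ∪ B × {1}` is `A + B u`, and its product with its inverse is
`(A A⁽⁻¹⁾ + B B⁽⁻¹⁾) + (A B⁽⁻¹⁾ + B A⁽⁻¹⁾) u`. The `H_4^*` condition over `G × ℤ/2` therefore
splits into an identity for the `u`-free parts, supplied by the type `H` and type `H_4^*`
conditions, and one for the `u`-parts, supplied by (d3) and (c1); passing from `D₂, D₃` to their
complements only shifts both parts by multiples of `G`, since `A G = |A| G`.
-/

open AddMonoidAlgebra

section GroupRing

variable {G : Type*} [AddCommGroup G] [DecidableEq G]

lemma mem_negSet {A : Finset G} {x : G} : x ∈ negSet A ↔ -x ∈ A := by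
  simp [negSet, neg_eq_iff_eq_neg]

lemma negSet_union (A B : Finset G) : negSet (A ∪ B) = negSet A ∪ negSet B :=
  image_union _ _

lemma card_negSet (A : Finset G) : #(negSet A) = #A :=
  card_image_of_injective _ neg_injective

variable [Fintype G]

lemma negSet_univ_sdiff (A : Finset G) : negSet (univ \ A) = univ \ negSet A := by
  ext x
  simp [mem_negSet]

lemma grp_univ_sdiff (A : Finset G) : grp (univ \ A) = grp univ - grp A :=
  sum_sdiff_eq_sub (subset_univ A)

omit [AddCommGroup G] in
lemma intCast_card_univ_sdiff (A : Finset G) : (#(univ \ A) : ℤ) = Fintype.card G - #A := by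
  rw [cast_card_sdiff (subset_univ A), card_univ]

lemma single_mul_grp_univ (a : G) : single a (1 : ℤ) * grp (univ : Finset G) = grp univ := by
  simp only [grp, mul_sum, single_mul_single, one_mul]
  exact Fintype.sum_equiv (Equiv.addLeft a) _ _ fun _ => rfl

lemma grp_mul_grp_univ (A : Finset G) : grp A * grp (univ : Finset G) = (#A : ℤ) • grp univ := by
  rw [grp, sum_mul]
  simp only [single_mul_grp_univ, sum_const, natCast_zsmul]

lemma grp_univ_sdiff_mul_negSet (A : Finset G) :
    grp (univ \ A) * grp (negSet (univ \ A)) =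
      ((Fintype.card G : ℤ) - 2 * #A) • grp univ + grp A * grp (negSet A) := by
  have hJ := grp_mul_grp_univ (univ : Finset G)
  have hA := grp_mul_grp_univ A
  have hA' := grp_mul_grp_univ (negSet A)
  rw [card_negSet] at hA'
  rw [card_univ] at hJ
  rw [negSet_univ_sdiff, grp_univ_sdiff, grp_univ_sdiff]
  simp only [zsmul_eq_mul] at hJ hA hA' ⊢
  push_cast at hJ ⊢
  linear_combination hJ - hA - hA'

lemma grp_mul_negSet_univ_sdiff_add (A B : Finset G) :
    grp A * grp (negSet (univ \ B)) + grp (univ \ B) * grp (negSet A) =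
      (2 * #A : ℤ) • grp univ - (grp A * grp (negSet B) + grp B * grp (negSet A)) := by
  have hA := grp_mul_grp_univ A
  have hA' := grp_mul_grp_univ (negSet A)
  rw [card_negSet] at hA'
  rw [negSet_univ_sdiff, grp_univ_sdiff, grp_univ_sdiff]
  simp only [zsmul_eq_mul] at hA hA' ⊢
  push_cast
  linear_combination hA + hA'

end GroupRing

noncomputable section ProductWithZMod2

variable {G : Type*} [AddCommGroup G] [DecidableEq G]

variable (G) in
def inlAlg : AddMonoidAlgebra ℤ G →+* AddMonoidAlgebra ℤ (G × ZMod 2) :=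
  mapDomainRingHom ℤ (AddMonoidHom.inl G (ZMod 2))

variable (G) in
def genZMod2 : AddMonoidAlgebra ℤ (G × ZMod 2) :=
  single ((0 : G), (1 : ZMod 2)) 1

omit [DecidableEq G] in
lemma genZMod2_mul_self : genZMod2 G * genZMod2 G = 1 := by
  rw [genZMod2, single_mul_single, one_def, mul_one, Prod.mk_add_mk, add_zero]
  rfl

lemma grp_prod_singleton (A : Finset G) (t : ZMod 2) :
    grp (A ×ˢ {t}) = inlAlg G (grp A) * single ((0 : G), t) 1 := by
  simp [grp, map_sum, sum_mul, inlAlg, single_mul_single]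

lemma negSet_prod_singleton (A : Finset G) (t : ZMod 2) :
    negSet (A ×ˢ {t}) = negSet A ×ˢ {t} := by
  have hneg : -t = t := by fin_cases t <;> rfl
  ext ⟨x, s⟩
  simp only [mem_negSet, Prod.neg_mk, mem_product, mem_singleton, neg_eq_iff_eq_neg, hneg]

def stack (A B : Finset G) : Finset (G × ZMod 2) :=
  A ×ˢ {0} ∪ B ×ˢ {1}

omit [AddCommGroup G] [DecidableEq G] in
lemma disjoint_prod_zero_prod_one (A B : Finset G) :
    Disjoint (A ×ˢ ({0} : Finset (ZMod 2))) (B ×ˢ {1}) :=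
  disjoint_product.mpr (Or.inr (disjoint_singleton.mpr (by decide)))

lemma grp_stack (A B : Finset G) :
    grp (stack A B) = inlAlg G (grp A) + inlAlg G (grp B) * genZMod2 G := by
  rw [stack, grp, sum_union (disjoint_prod_zero_prod_one A B), ← grp, ← grp, grp_prod_singleton,
    grp_prod_singleton, ← Prod.zero_eq_mk, ← one_def, mul_one, genZMod2]

omit [AddCommGroup G] in
lemma card_stack (A B : Finset G) :
    #(stack A B) = #A + #B := by
  rw [stack, card_union_of_disjoint (disjoint_prod_zero_prod_one A B), card_product, card_product,
    card_singleton, card_singleton, mul_one, mul_one]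

lemma negSet_stack (A B : Finset G) :
    negSet (stack A B) = stack (negSet A) (negSet B) := by
  rw [stack, stack, negSet_union, negSet_prod_singleton, negSet_prod_singleton]

lemma grp_stack_mul_negSet (A B : Finset G) :
    grp (stack A B) * grp (negSet (stack A B)) =
      inlAlg G (grp A * grp (negSet A) + grp B * grp (negSet B))
        + inlAlg G (grp A * grp (negSet B) + grp B * grp (negSet A)) * genZMod2 G := by
  rw [negSet_stack, grp_stack, grp_stack]
  simp only [map_add, map_mul]
  linear_combination (inlAlg G (grp B) * inlAlg G (grp (negSet B))) * genZMod2_mul_self (G := G)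

omit [AddCommGroup G] in
lemma stack_univ_univ [Fintype G] : stack (univ : Finset G) univ = univ := by
  ext ⟨x, t⟩
  simp only [stack, mem_union, mem_product, mem_univ, mem_singleton, true_and, iff_true]
  exact (by decide : ∀ t : ZMod 2, t = 0 ∨ t = 1) t

lemma grp_univ_prod_zmod2 [Fintype G] :
    grp (univ : Finset (G × ZMod 2)) = inlAlg G (grp univ) + inlAlg G (grp univ) * genZMod2 G := by
  rw [← grp_stack, stack_univ_univ]

lemma isTypeH4star_prod_zmod2 [Fintype G] (A B : Fin 4 → Finset G)
    (heven : ∑ i, (grp (A i) * grp (negSet (A i)) + grp (B i) * grp (negSet (B i))) =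
      ((∑ i, ((#(A i) : ℤ) + #(B i))) - (2 * Fintype.card G + 1)) • grp univ
        + (2 * Fintype.card G + 1 : ℤ) • single 0 1)
    (hodd : ∑ i, (grp (A i) * grp (negSet (B i)) + grp (B i) * grp (negSet (A i))) =
      ((∑ i, ((#(A i) : ℤ) + #(B i))) - (2 * Fintype.card G + 1)) • grp univ) :
    IsTypeH4star fun i => stack (A i) (B i) := by
  unfold IsTypeH4star
  simp only [grp_stack_mul_negSet]
  rw [sum_add_distrib, ← sum_mul, ← map_sum, ← map_sum, heven, hodd]
  simp only [card_stack, Nat.cast_add, sum_add_distrib, grp_univ_prod_zmod2, Fintype.card_prod,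
    ZMod.card, map_add, map_zsmul]
  rw [← one_def, ← one_def, map_one]
  push_cast
  simp only [smul_add, smul_mul_assoc]
  ring

end ProductWithZMod2

/-- product construction with `ℤ/2ℤ` from a type-`H` family satisfying (d3)
and a type-`H_4^*` family satisfying (c1). -/
theorem product_construction_Z2 {G : Type*} [AddCommGroup G] [Fintype G] [DecidableEq G]
    (D S : Fin 4 → Finset G) (hH : IsTypeH D) (hd3 : CondD3 D)
    (hS : IsTypeH4star S) (hc1 : CondC1 S) :
    IsTypeH4star (G := G × ZMod 2)
      ![(D 0) ×ˢ ({0} : Finset (ZMod 2)) ∪ ((Finset.univ : Finset G) \ D 2) ×ˢ {1},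
        (D 1) ×ˢ ({0} : Finset (ZMod 2)) ∪ ((Finset.univ : Finset G) \ D 3) ×ˢ {1},
        (S 0) ×ˢ ({0} : Finset (ZMod 2)) ∪ (S 2) ×ˢ {1},
        (S 1) ×ˢ ({0} : Finset (ZMod 2)) ∪ (S 3) ×ˢ {1}] := by
  convert isTypeH4star_prod_zmod2 ![D 0, D 1, S 0, S 1] ![univ \ D 2, univ \ D 3, S 2, S 3] ?_ ?_
    using 1
  · ext i : 1
    fin_cases i <;> rfl
  all_goals
    simp only [IsTypeH, IsTypeH4star, CondD3, CondC1, Fin.sum_univ_four, Matrix.cons_val_zero,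
      Matrix.cons_val_one, Matrix.cons_val_two, Matrix.cons_val_three, Matrix.head_cons,
      Matrix.tail_cons, grp_univ_sdiff_mul_negSet, grp_mul_negSet_univ_sdiff_add,
      intCast_card_univ_sdiff, zsmul_eq_mul] at hH hS hd3 hc1 ⊢
    push_cast at hH hS hd3 hc1 ⊢
  · linear_combination hH + hS
  · linear_combination hc1 - hd3
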